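/- arXiv:alg-geom/9602015 — 3 statements merged into one kernel-verified Lean document; each statement's English description precedes it below -/
import Mathlib

section
/- Let k be an infinite field and D a division ring that is a k-algebra with k contained in its centre. Let A = M_n(D) and let B be a dense k-subalgebra of A. Suppose m ≤ n and let V ⊆ M_{n×m}(D) be a B-submodule of the left A-module M_{n×m}(D) (A acting by matrix multiplication) such that the A-submodule generated by V is all of M_{n×m}(D). Then V contains a matrix X of rank m, i.e. a matrix whose m columns, regarded as elements of the right D-module D^n, are right D-linearly independent. -/
/-!
Take `X₀ ∈ V` of maximal rank `r` and suppose `X₀ c = 0` with `c ≠ 0`. The `Dᵐᵒᵖ`-span of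
`{Y c | Y ∈ V}` is stable under `B` and under `End_A(Dⁿ) = Dᵐᵒᵖ`, so by density it is `0` or
`Dⁿ`. It is nonzero because `V` generates, so it is `Dⁿ` and does not lie in the column space of
`X₀`, whose dimension is `r < m ≤ n`. Pick `Y ∈ V` with `Y c ∉ col X₀`. Extending a basis `X₀ dₚ`
of `col X₀` by `Y c` gives an independent family whose perturbation `(X₀ dₚ + t Y dₚ, Y c)` lies
in `col (X₀ + t Y)`. An independent family `a` stays independent as `a + t b` for all but finitely
many `t ∈ k`, since each exceptional `t` yields an eigenvector with the central eigenvalue `-t⁻¹`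
of one fixed endomorphism of a finite-dimensional space. So some `X₀ + t Y ∈ V` has rank `> r`.
-/

/-- A subring `B` of a ring `A` is *dense* in `A` if every simple left `A`-module `U`
is simple as a `B`–`End_A U`-bimodule: the only additive subgroups of `U` stable under
the action of every element of `B` and under every `A`-linear endomorphism of `U`
are `⊥` and `⊤`. -/
def IsDenseSubring (A : Type) [Ring A] (B : Subring A) : Prop :=
  ∀ (U : Type) [AddCommGroup U] [Module A U], IsSimpleModule A U →
    ∀ S : AddSubgroup U, (∀ b ∈ B, ∀ u ∈ S, b • u ∈ S) →
      (∀ f : U →ₗ[A] U, ∀ u ∈ S, f u ∈ S) → S = ⊥ ∨ S = ⊤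

open Module Matrix

section Perturbation

variable {k E : Type*} [Field k] [DivisionRing E] [Algebra k E]

-- The `k`-eigenspaces of `L` are `E`-submodules, and their independence transfers from `k`
-- to `E`, over which `M` is finite-dimensional.
theorem finite_setOf_hasEigenvector {M : Type*} [AddCommGroup M] [Module E M] [Module k M]
    [IsScalarTower k E M] [FiniteDimensional E M] (L : M →ₗ[E] M) :
    {μ : k | ∃ v ≠ 0, L v = μ • v}.Finite := by
  let N : k → Submodule E M := fun μ =>
    { carrier := {v | L v = μ • v}
      add_mem' := fun {v w} hv hw => by simp_all [smul_add]
      zero_mem' := by simp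
      smul_mem' := fun e v hv => by simp_all [smul_comm e μ v] }
  have hN : ∀ μ, (N μ).restrictScalars k = Module.End.eigenspace (L.restrictScalars k) μ := by
    intro μ; ext v; simp [N]
  have hind : iSupIndep N := fun μ => by
    have := (Module.End.eigenspaces_iSupIndep (L.restrictScalars k) μ)
    simp only [disjoint_iff] at this ⊢
    rw [← Submodule.restrictScalars_eq_bot_iff k, Submodule.restrictScalars_inf,
      Submodule.restrictScalars_iSup]
    simpa [hN] using this
  have := hind.fintypeNeBotOfFiniteDimensional
  refine (Set.finite_range fun μ : {μ // N μ ≠ ⊥} => (μ : k)).subset ?_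
  rintro μ ⟨v, hv, hLv⟩
  exact ⟨⟨μ, (Submodule.ne_bot_iff _).2 ⟨v, hLv, hv⟩⟩, rfl⟩

theorem finite_setOf_not_linearIndependent_add_smul {ι N : Type*} [Fintype ι]
    [AddCommGroup N] [Module E N] [Module k N] [IsScalarTower k E N]
    {a : ι → N} (ha : LinearIndependent E a) (b : ι → N) :
    {t : k | ¬ LinearIndependent E (a + t • b)}.Finite := by
  obtain ⟨h, hh⟩ := (Fintype.linearCombination E a).exists_leftInverse_of_injective
    (LinearMap.ker_eq_bot.2 (linearIndependent_iff_injective_fintypeLinearCombination.1 ha))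
  -- A relation `g` for `a + t • b` is an eigenvector of `h ∘ₗ (b-combination)` for `-t⁻¹`.
  let L := h ∘ₗ Fintype.linearCombination E b
  refine ((finite_setOf_hasEigenvector L).image fun μ => -μ⁻¹).subset ?_
  intro t ht
  obtain ⟨g, hg, i, hgi⟩ := Fintype.not_linearIndependent_iff.1 ht
  have hcomb : Fintype.linearCombination E a g + t • Fintype.linearCombination E b g = 0 := by
    rw [Fintype.linearCombination_apply, Fintype.linearCombination_apply, Finset.smul_sum,
      ← Finset.sum_add_distrib, ← hg]
    simp only [Pi.add_apply, Pi.smul_apply, smul_add, smul_comm t]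
  have hgL : g + t • L g = 0 := by
    have := congrArg h hcomb
    rwa [map_add, LinearMap.map_smul_of_tower, map_zero, ← LinearMap.comp_apply, hh,
      LinearMap.id_apply] at this
  have hg0 : g ≠ 0 := fun h0 => hgi (by simp [h0])
  have ht0 : t ≠ 0 := by rintro rfl; simp_all
  refine ⟨-t⁻¹, ⟨g, hg0, ?_⟩, by simp⟩
  rw [neg_smul, ← smul_neg, ← eq_neg_of_add_eq_zero_right hgL, inv_smul_smul₀ ht0]

theorem exists_finrank_range_lt_finrank_range_add_smul [Infinite k] {M N : Type*}
    [AddCommGroup M] [Module E M] [AddCommGroup N] [Module E N] [Module k N]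
    [IsScalarTower k E N] [FiniteDimensional E N] (f g : M →ₗ[E] N) {c : M} (hc : f c = 0)
    (hgc : g c ∉ LinearMap.range f) :
    ∃ t : k, finrank E (LinearMap.range f) < finrank E (LinearMap.range (f + t • g)) := by
  let w := Module.finBasis E (LinearMap.range f)
  choose d hd using fun p => LinearMap.mem_range.1 (w p).2
  have hw : LinearIndependent E (fun p => (w p : N)) :=
    w.linearIndependent.map' _ (LinearMap.range f).ker_subtype
  have hspan : Submodule.span E (Set.range fun p => (w p : N)) = LinearMap.range f := by
    rw [Set.range_comp' Subtype.val w, ← Submodule.coe_subtype, Submodule.span_image, w.span_eq,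
      Submodule.map_subtype_top]
  let a : Fin _ → N := Fin.snoc (fun p => (w p : N)) (g c)
  let b : Fin _ → N := Fin.snoc (fun p => g (d p)) 0
  have ha : LinearIndependent E a := linearIndependent_finSnoc.2 ⟨hw, by rwa [hspan]⟩
  obtain ⟨t, ht⟩ := ((finite_setOf_not_linearIndependent_add_smul ha b).union
    (Set.finite_singleton (0 : k))).infinite_compl.nonempty
  simp only [Set.mem_compl_iff, Set.mem_union, Set.mem_ofPred_eq, Set.mem_singleton_iff,
    not_or, not_not] at ht
  obtain ⟨hind, ht0⟩ := ht
  have hmem : ∀ p, (a + t • b) p ∈ LinearMap.range (f + t • g) := by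
    refine Fin.lastCases ⟨algebraMap k E t⁻¹ • c, ?_⟩ fun p => ⟨d p, ?_⟩
    · simp only [a, b, Pi.add_apply, Pi.smul_apply, Fin.snoc_last, smul_zero, add_zero,
        LinearMap.add_apply, LinearMap.smul_apply, map_smul, hc, zero_add]
      rw [algebraMap_smul, inv_smul_smul₀ ht0]
    · simp [a, b, hd]
  refine ⟨t, ?_⟩
  calc finrank E (LinearMap.range f)
        < Fintype.card (Fin (finrank E (LinearMap.range f) + 1)) := by simp
    _ = finrank E (Submodule.span E (Set.range (a + t • b))) := (finrank_span_eq_card hind).symm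
    _ ≤ _ := Submodule.finrank_mono (Submodule.span_le.2 (Set.range_subset_iff.2 hmem))

end Perturbation

theorem finrank_mulOpposite_self_eq_one (D : Type*) [DivisionRing D] : finrank Dᵐᵒᵖ D = 1 :=
  finrank_eq_one_iff'.2 ⟨1, one_ne_zero, fun w => ⟨MulOpposite.op w, one_mul w⟩⟩

instance (D : Type*) [DivisionRing D] : Module.Finite Dᵐᵒᵖ D :=
  Module.finite_of_finrank_eq_succ (finrank_mulOpposite_self_eq_one D)

theorem finrank_mulOpposite_pi (ι D : Type*) [Fintype ι] [DivisionRing D] :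
    finrank Dᵐᵒᵖ (ι → D) = Fintype.card ι := by
  simp [Module.finrank_pi_fintype, finrank_mulOpposite_self_eq_one]

namespace Matrix

variable {ι D : Type*} [Fintype ι] [DecidableEq ι] [DivisionRing D]

theorem exists_mulVec_eq_of_ne_zero {u : ι → D} (hu : u ≠ 0) (v : ι → D) :
    ∃ a : Matrix ι ι D, a *ᵥ u = v := by
  obtain ⟨i, hi⟩ := Function.ne_iff.1 hu
  exact ⟨vecMulVec v (Pi.single i (u i)⁻¹), by
    simp [vecMulVec_mulVec, single_dotProduct, inv_mul_cancel₀ hi]⟩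

theorem isSimpleModule_pi [Nonempty ι] : IsSimpleModule (Matrix ι ι D) (ι → D) :=
  isSimpleModule_iff_toSpanSingleton_surjective.2
    ⟨inferInstance, fun _ hu v => exists_mulVec_eq_of_ne_zero hu v⟩

theorem exists_eq_op_smul_of_linearMap [Nonempty ι] (f : (ι → D) →ₗ[Matrix ι ι D] (ι → D)) :
    ∃ d : Dᵐᵒᵖ, ∀ u, f u = d • u := by
  obtain ⟨i⟩ := ‹Nonempty ι›
  set e : ι → D := Pi.single i 1
  obtain ⟨d, hfe⟩ : ∃ d : Dᵐᵒᵖ, f e = d • e := by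
    refine ⟨MulOpposite.op (f e i), ?_⟩
    conv_lhs => rw [← show single i i (1 : D) *ᵥ e = e by rw [single_mulVec_eq]; simp [e]]
    rw [← smul_eq_mulVec, map_smul, smul_eq_mulVec, single_mulVec_eq]
    ext j
    simp [e, Pi.single_apply]
  refine ⟨d, fun u => ?_⟩
  obtain ⟨a, rfl⟩ := exists_mulVec_eq_of_ne_zero (Pi.single_ne_zero_iff.2 one_ne_zero : e ≠ 0) u
  rw [← smul_eq_mulVec, map_smul, hfe, smul_comm]

end Matrix

theorem IsDenseSubring.submodule_eq_bot_or_eq_top {ι D : Type} [Fintype ι] [DecidableEq ι]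
    [Nonempty ι] [DivisionRing D] {B : Subring (Matrix ι ι D)}
    (hB : IsDenseSubring (Matrix ι ι D) B)
    (S : Submodule Dᵐᵒᵖ (ι → D)) (hS : ∀ b ∈ B, ∀ u ∈ S, b *ᵥ u ∈ S) : S = ⊥ ∨ S = ⊤ := by
  refine (hB (ι → D) isSimpleModule_pi S.toAddSubgroup hS fun f u hu => ?_).imp
    (fun h => ?_) fun h => ?_
  · obtain ⟨d, hd⟩ := exists_eq_op_smul_of_linearMap f
    exact hd u ▸ S.smul_mem d hu
  · exact Submodule.toAddSubgroup_injective h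
  · exact Submodule.toAddSubgroup_injective h

theorem LinearMap.ker_eq_bot_of_range_eq_top_of_finrank_le {E M N : Type*} [DivisionRing E]
    [AddCommGroup M] [Module E M] [FiniteDimensional E M] [AddCommGroup N] [Module E N]
    {f : M →ₗ[E] N} (hle : finrank E M ≤ finrank E N) (h : LinearMap.range f = ⊤) :
    LinearMap.ker f = ⊥ := by
  have := f.finrank_range_add_finrank_ker
  rw [h, finrank_top] at this
  exact Submodule.finrank_eq_zero.1 (by omega)

section GeneratingSubgroup

variable {ι κ D : Type} [Fintype ι] [DecidableEq ι] [Nonempty ι] [Fintype κ] [DivisionRing D]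
  {V : AddSubgroup (Matrix ι κ D)}

theorem exists_mem_mulVec_ne_zero
    (hgen : ∀ S : AddSubgroup (Matrix ι κ D),
      (∀ a : Matrix ι ι D, ∀ w ∈ S, a * w ∈ S) → V ≤ S → S = ⊤)
    {c : κ → D} (hc : c ≠ 0) : ∃ Y ∈ V, Y *ᵥ c ≠ 0 := by
  classical
  by_contra! h
  obtain ⟨j, hj⟩ := Function.ne_iff.1 hc
  obtain ⟨i⟩ := ‹Nonempty ι›
  let S := (AddMonoidHom.mk' (fun Y : Matrix ι κ D => Y *ᵥ c) fun Y Z => add_mulVec Y Z c).ker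
  have hS : S = ⊤ := hgen S (fun a w hw => by simp_all [S, ← mulVec_mulVec]) h
  have := congrFun (AddMonoidHom.mem_ker.1 (hS ▸ AddSubgroup.mem_top (single i j 1))) i
  simp [single_mulVec] at this
  exact hj this

theorem exists_mem_mulVec_notMem {B : Subring (Matrix ι ι D)}
    (hB : IsDenseSubring (Matrix ι ι D) B) (hV : ∀ b ∈ B, ∀ v ∈ V, b * v ∈ V)
    (hgen : ∀ S : AddSubgroup (Matrix ι κ D),
      (∀ a : Matrix ι ι D, ∀ w ∈ S, a * w ∈ S) → V ≤ S → S = ⊤)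
    {c : κ → D} (hc : c ≠ 0) {W : Submodule Dᵐᵒᵖ (ι → D)} (hW : W ≠ ⊤) :
    ∃ Y ∈ V, Y *ᵥ c ∉ W := by
  by_contra! h
  let S := Submodule.span Dᵐᵒᵖ ((· *ᵥ c) '' (V : Set (Matrix ι κ D)))
  have hSB : ∀ b ∈ B, ∀ u ∈ S, b *ᵥ u ∈ S := fun b hb u hu => by
    induction hu using Submodule.span_induction with
    | mem _ hx =>
      obtain ⟨Y, hY, rfl⟩ := hx
      exact Submodule.subset_span ⟨b * Y, hV b hb Y hY, (mulVec_mulVec c b Y).symm⟩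
    | zero => simp
    | add _ _ _ _ hx hy => rw [mulVec_add]; exact S.add_mem hx hy
    | smul d _ _ hx => rw [mulVec_smul]; exact S.smul_mem d hx
  rcases hB.submodule_eq_bot_or_eq_top S hSB with hS | hS
  · obtain ⟨Y, hY, hYc⟩ := exists_mem_mulVec_ne_zero hgen hc
    have hYS : Y *ᵥ c ∈ S := Submodule.subset_span ⟨Y, hY, rfl⟩
    exact hYc ((Submodule.mem_bot _).1 (hS ▸ hYS))
  · exact hW (top_unique (hS ▸ Submodule.span_le.2 (by rintro _ ⟨Y, hY, rfl⟩; exact h Y hY)))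

end GeneratingSubgroup

/-- Let `k` be an infinite field, `D` a division ring which is a `k`-algebra (so `k` is
central in `D`), `A = M_n(D)` and `B` a dense `k`-subalgebra of `A`.  If `m ≤ n` and
`V ⊆ M_{n×m}(D)` is a `B`-submodule of the left `A`-module `M_{n×m}(D)` which generates
it as an `A`-module, then `V` contains a matrix of rank `m`, i.e. one whose `m` columns
are right `D`-linearly independent in the right `D`-module `D^n`. -/
theorem dense_subalgebra_submodule_contains_full_rank_matrix
    (k : Type) [Field k] [Infinite k] (D : Type) [DivisionRing D] [Algebra k D]
    (n m : ℕ) (hm : m ≤ n)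
    (B : Subalgebra k (Matrix (Fin n) (Fin n) D))
    (hB : IsDenseSubring (Matrix (Fin n) (Fin n) D) B.toSubring)
    (V : AddSubgroup (Matrix (Fin n) (Fin m) D))
    (hV : ∀ b ∈ B, ∀ v ∈ V, b * v ∈ V)
    (hgen : ∀ S : AddSubgroup (Matrix (Fin n) (Fin m) D),
      (∀ a : Matrix (Fin n) (Fin n) D, ∀ w ∈ S, a * w ∈ S) → V ≤ S → S = ⊤) :
    ∃ X ∈ V, ∀ c : Fin m → D, (∀ i : Fin n, ∑ j, X i j * c j = 0) → c = 0 := by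
  let T := mulVecBilin k Dᵐᵒᵖ (m := Fin n) (n := Fin m) (A := D)
  let colRank : Matrix (Fin n) (Fin m) D → ℕ := fun X => finrank Dᵐᵒᵖ (LinearMap.range (T X))
  obtain ⟨X₀, hX₀, hmax⟩ : ∃ X₀ ∈ V, ∀ X ∈ V, colRank X ≤ colRank X₀ := by
    have hbdd : BddAbove (colRank '' V) := ⟨n, by
      rintro _ ⟨X, -, rfl⟩
      simpa [finrank_mulOpposite_pi] using Submodule.finrank_le (LinearMap.range (T X))⟩
    obtain ⟨_, ⟨X₀, hX₀, rfl⟩, hmax⟩ :=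
      hbdd.exists_isGreatest_of_nonempty ⟨_, 0, V.zero_mem, rfl⟩
    exact ⟨X₀, hX₀, fun X hX => hmax ⟨X, hX, rfl⟩⟩
  refine ⟨X₀, hX₀, fun c hc => by_contra fun hc0 => ?_⟩
  have hX₀c : T X₀ c = 0 := funext hc
  obtain ⟨j, -⟩ := Function.ne_iff.1 hc0
  have : Nonempty (Fin n) := ⟨Fin.castLE hm j⟩
  have hrange : LinearMap.range (T X₀) ≠ ⊤ := fun h => hc0 <| LinearMap.ker_eq_bot'.1
    (LinearMap.ker_eq_bot_of_range_eq_top_of_finrank_le (by simpa [finrank_mulOpposite_pi]) h)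
    c hX₀c
  obtain ⟨Y, hY, hYc⟩ := exists_mem_mulVec_notMem hB hV hgen hc0 hrange
  obtain ⟨t, ht⟩ := exists_finrank_range_lt_finrank_range_add_smul (k := k) (T X₀) (T Y) hX₀c hYc
  have htY : t • Y ∈ V := by simpa using hV _ (B.smul_mem B.one_mem t) Y hY
  exact (hmax _ (V.add_mem hX₀ htY)).not_gt (by rwa [← map_smul, ← map_add] at ht)
end

section
/- Let Λ be a CM-algebra over R and Γ an overring of Λ. Let M, M′ ⊆ Γ^n be Λ-submodules (for the action of Λ through its image in Γ) such that the Γ-submodules of Γ^n generated by M and by M′ are both equal to Γ^n. Then M and M′ are isomorphic as Λ-modules if and only if there exists an automorphism σ of Γ^n as a Γ-module with σ(M) = M′. -/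
set_option synthInstance.maxHeartbeats 1000000
set_option maxHeartbeats 1000000

noncomputable section

/-- The completed algebra `Λ̂ = R̂ ⊗_R Λ`, where `R̂` is the `m`-adic completion of the
local ring `R`. -/
abbrev CompletedAlgebra (R : Type) [CommRing R] [IsLocalRing R]
    (Λ : Type) [Ring Λ] [Algebra R Λ] : Type :=
  TensorProduct R (AdicCompletion (IsLocalRing.maximalIdeal R) R) Λ

/-- `QΛ = Q ⊗_R Λ`, where `Q` is the total ring of fractions of `R`. -/
abbrev TotalFractionAlgebra (R : Type) [CommRing R]
    (Λ : Type) [Ring Λ] [Algebra R Λ] : Type :=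
  TensorProduct R (FractionRing R) Λ

/-- The canonical map `Λ → QΛ`, `x ↦ 1 ⊗ x`. -/
def inclQ (R : Type) [CommRing R] (Λ : Type) [Ring Λ] [Algebra R Λ] :
    Λ →+* TotalFractionAlgebra R Λ :=
  (Algebra.TensorProduct.includeRight (R := R) (A := FractionRing R) (B := Λ)).toRingHom

/-- A (1-dimensional, analytically reduced) CM-algebra over the local noetherian ring
`R`: `Λ` is a finitely generated torsion-free `R`-module and the completion
`Λ̂ = R̂ ⊗_R Λ` has no nonzero nilpotent two-sided ideal. -/
def IsCMAlgebra (R : Type) [CommRing R] [IsLocalRing R]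
    (Λ : Type) [Ring Λ] [Algebra R Λ] : Prop :=
  Module.Finite R Λ ∧
  (∀ r ∈ nonZeroDivisors R, Function.Injective fun x : Λ => r • x) ∧
  (∀ I : TwoSidedIdeal (CompletedAlgebra R Λ),
    (∃ N : ℕ, ∀ f : Fin (N + 1) → CompletedAlgebra R Λ,
      (∀ t, f t ∈ I) → (List.ofFn f).prod = 0) → I = ⊥)

/-- An overring of a CM-algebra `Λ`: a subring `Γ` of `QΛ` containing the image of `Λ`
which is finitely generated as a `Λ`-module. -/
def IsOverring (R : Type) [CommRing R] (Λ : Type) [Ring Λ] [Algebra R Λ]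
    (Γ : Subring (TotalFractionAlgebra R Λ)) : Prop :=
  (∀ x : Λ, inclQ R Λ x ∈ Γ) ∧
  ∃ s : Finset (TotalFractionAlgebra R Λ), (↑s : Set (TotalFractionAlgebra R Λ)) ⊆ Γ ∧
    ∀ x ∈ Γ, ∃ c : TotalFractionAlgebra R Λ → Λ,
      x = ∑ t ∈ s, inclQ R Λ (c t) * t

/-- `Γ^n ⊆ (QΛ)^n`, the additive subgroup of vectors with all coordinates in `Γ`. -/
def gammaPow (R : Type) [CommRing R] (Λ : Type) [Ring Λ] [Algebra R Λ]
    (Γ : Subring (TotalFractionAlgebra R Λ)) (n : ℕ) :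
    AddSubgroup (Fin n → TotalFractionAlgebra R Λ) :=
  AddSubgroup.pi Set.univ fun _ => Γ.toAddSubgroup

/-! A `Λ`-linear isomorphism `e : M ≅ M'` extends to the saturations
`QM = {v | r • v ∈ M for some non-zero-divisor r}` by `v ↦ r⁻¹ • e (r • v)`. Since every element
of `QΛ` is a fraction `r⁻¹ x` with `x ∈ Λ`, this extension is `QΛ`-linear, in particular
`Γ`-linear. The vectors of `QM` that the extension sends into `Γ^n` form a `Γ`-stable subgroup
containing `M`, hence containing `ΓM = Γ^n`; the same holds for the inverse, so the extension
restricts to a `Γ`-automorphism of `Γ^n` carrying `M` onto `M'`. Conversely, a `Γ`-automorphism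
of `Γ^n` restricts to a `Λ`-isomorphism `M ≅ M'` because `Λ ⊆ Γ`. -/

open scoped nonZeroDivisors

section Equivariance

variable {A B V : Type*} [Ring A] [AddCommGroup V] [Module A V]

def SMulStable (f : B → A) (M : AddSubgroup V) : Prop :=
  ∀ b, ∀ v ∈ M, f b • v ∈ M

def SMulEquivariant (f : B → A) {M M' : AddSubgroup V} (e : M ≃+ M') : Prop :=
  ∀ b (v w : M), (w : V) = f b • (v : V) → (e w : V) = f b • (e v : V)

variable {f : B → A} {M M' : AddSubgroup V} {e : M ≃+ M'}

lemma SMulEquivariant.symm (hM : SMulStable f M) (he : SMulEquivariant f e) :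
    SMulEquivariant f e.symm := by
  intro b v w hw
  have hmap : e ⟨_, hM b _ (e.symm v).2⟩ = w :=
    Subtype.ext <| by rw [he b (e.symm v) _ rfl, e.apply_symm_apply, hw]
  rw [← hmap, e.symm_apply_apply]

lemma SMulEquivariant.exists_restrict {P P' : AddSubgroup V} {E : P ≃+ P'}
    (hE : SMulEquivariant f E) (hM : M ≤ P) (hM' : M' ≤ P')
    (h : ∀ v : P, (v : V) ∈ M ↔ (E v : V) ∈ M') :
    ∃ e : M ≃+ M', SMulEquivariant f e ∧ ∀ v : M, (e v : V) = E ⟨v, hM v.2⟩ := by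
  have hsymm (v : M') : (E.symm ⟨v, hM' v.2⟩ : V) ∈ M := (h _).2 (by simp)
  let e : M ≃+ M' :=
    { toFun := fun v => ⟨E ⟨v, hM v.2⟩, (h _).1 v.2⟩
      invFun := fun v => ⟨E.symm ⟨v, hM' v.2⟩, hsymm v⟩
      left_inv := fun v => by simp
      right_inv := fun v => by simp
      map_add' := fun v w => Subtype.ext <| by
        simp only [AddSubgroup.coe_add]
        exact congrArg Subtype.val (E.map_add ⟨v, hM v.2⟩ ⟨w, hM w.2⟩) }
  exact ⟨e, fun b v w hw => hE b _ _ hw, fun _ => rfl⟩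

lemma LinearEquiv.smulEquivariant {P P' : Submodule A V} (E : P ≃ₗ[A] P') (f : B → A) :
    SMulEquivariant (M := P.toAddSubgroup) (M' := P'.toAddSubgroup) f E.toAddEquiv := by
  intro b v w hw
  have hw' : (⟨w, w.2⟩ : P) = f b • (⟨v, v.2⟩ : P) := Subtype.ext hw
  exact congrArg Subtype.val ((congrArg E hw').trans (E.map_smul _ _))

/-- The hypothesis `hgen` says that `N` lies in the `f`-span of `M`. -/
lemma exists_mem_and_map_mem_of_generates {M N : AddSubgroup V} (hN : SMulStable f N)
    (hgen : ∀ T : AddSubgroup V, SMulStable f T → M ≤ T → N ≤ T) {P P' : Submodule A V}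
    (g : P →ₗ[A] P') (hMP : M ≤ P.toAddSubgroup)
    (hgM : ∀ v : P, (v : V) ∈ M → (g v : V) ∈ N) :
    ∀ v ∈ N, ∃ h : v ∈ P, (g ⟨v, h⟩ : V) ∈ N := by
  let T : AddSubgroup V :=
    (N.comap (P'.subtype.comp g).toAddMonoidHom).map P.subtype.toAddMonoidHom
  have hT (v : V) : v ∈ T ↔ ∃ h : v ∈ P, (g ⟨v, h⟩ : V) ∈ N := by
    simp [T]
  intro v hv
  refine (hT v).1 (hgen T (fun b w hw => ?_) (fun w hw => (hT w).2 ⟨hMP hw, hgM _ hw⟩) hv)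
  obtain ⟨hwP, hgw⟩ := (hT w).1 hw
  refine (hT _).2 ⟨P.smul_mem _ hwP, ?_⟩
  exact (congrArg Subtype.val (g.map_smul (f b) ⟨w, hwP⟩)).symm ▸ hN b _ hgw

end Equivariance

lemma mul_smul_add_eq {R V : Type*} [CommRing R] [AddCommGroup V] [Module R V]
    (s t : R) (v w : V) : (t * s) • (v + w) = t • s • v + s • t • w := by
  rw [smul_add, mul_smul, mul_comm, mul_smul]

section Saturation

variable {R Λ A V : Type*} [CommRing R] [Ring Λ] [Algebra R Λ] [Ring A] [Algebra R A]
  [AddCommGroup V] [Module A V] [Module R V] [IsScalarTower R A V]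
  {S : Submonoid R} {φ : Λ →ₐ[R] A} {M M' : AddSubgroup V} {e : M ≃+ M'}

lemma SMulStable.smul_mem (hM : SMulStable φ M) (r : R) {v : V} (hv : v ∈ M) : r • v ∈ M := by
  simpa only [AlgHom.commutes, algebraMap_smul] using hM (algebraMap R Λ r) v hv

lemma SMulEquivariant.map_smul_algebra (he : SMulEquivariant φ e) (r : R) {x : V} (hx : x ∈ M)
    (h : r • x ∈ M) : (e ⟨r • x, h⟩ : V) = r • (e ⟨x, hx⟩ : V) := by
  simpa only [AlgHom.commutes, algebraMap_smul] using
    he (algebraMap R Λ r) ⟨x, hx⟩ ⟨r • x, h⟩ (by simp only [AlgHom.commutes, algebraMap_smul])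

lemma mul_smul_smul_of_smul_eq {t : R} {a b : A} (h : t • a = b) (s : R) (v : V) :
    (t * s) • a • v = b • s • v := by
  rw [mul_smul, smul_comm s, ← smul_assoc, h]

variable (S) in
lemma isUnit_algebraMap_of_isLocalizedModule (φ : Λ →ₐ[R] A) [IsLocalizedModule S φ.toLinearMap]
    (s : S) : IsUnit (algebraMap R A s) := by
  obtain ⟨u, hu⟩ :=
    ((Module.End.isUnit_iff _).mp (IsLocalizedModule.map_units φ.toLinearMap s)).2 1
  replace hu : (s : R) • u = 1 := hu
  exact ⟨⟨_, u, by rwa [← Algebra.smul_def], by rwa [← Algebra.commutes, ← Algebra.smul_def]⟩,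
    rfl⟩

variable (S) in
lemma smul_right_injective_of_isLocalizedModule (φ : Λ →ₐ[R] A)
    [IsLocalizedModule S φ.toLinearMap] (s : S) : Function.Injective ((s : R) • · : V → V) := by
  intro v w h
  simp only [← algebraMap_smul A (s : R)] at h
  exact (isUnit_algebraMap_of_isLocalizedModule S φ s).smul_left_cancel.1 h

variable (S φ) [IsLocalizedModule S φ.toLinearMap]

/-- The localization `S⁻¹M`, realised inside `V`. -/
def saturation (M : AddSubgroup V) (hM : SMulStable φ M) : Submodule A V where
  carrier := {v | ∃ s : S, (s : R) • v ∈ M}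
  zero_mem' := ⟨1, by simp⟩
  add_mem' := by
    rintro v w ⟨s, hs⟩ ⟨t, ht⟩
    refine ⟨t * s, ?_⟩
    rw [Submonoid.coe_mul, mul_smul_add_eq]
    exact add_mem (hM.smul_mem _ hs) (hM.smul_mem _ ht)
  smul_mem' := by
    rintro a v ⟨s, hs⟩
    obtain ⟨⟨x, t⟩, hx⟩ := IsLocalizedModule.surj S φ.toLinearMap a
    refine ⟨t * s, ?_⟩
    rw [Submonoid.coe_mul, mul_smul_smul_of_smul_eq hx]
    exact hM x _ hs

variable {S φ} {hM : SMulStable φ M} {hM' : SMulStable φ M'}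

lemma mem_saturation {v : V} : v ∈ saturation S φ M hM ↔ ∃ s : S, (s : R) • v ∈ M := Iff.rfl

lemma le_saturation : M ≤ (saturation S φ M hM).toAddSubgroup :=
  fun v hv => ⟨1, by simpa using hv⟩

def saturationDen (v : saturation S φ M hM) : S := (mem_saturation.1 v.2).choose

lemma saturationDen_smul_mem (v : saturation S φ M hM) : (saturationDen v : R) • (v : V) ∈ M :=
  (mem_saturation.1 v.2).choose_spec

def saturationMapFun (e : M ≃+ M') (v : saturation S φ M hM) : V :=
  (isUnit_algebraMap_of_isLocalizedModule S φ (saturationDen v)).unit⁻¹ •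
    (e ⟨_, saturationDen_smul_mem v⟩ : V)

lemma smul_saturationMapFun (he : SMulEquivariant φ e) (v : saturation S φ M hM) (s : S)
    (hs : (s : R) • (v : V) ∈ M) : (s : R) • saturationMapFun e v = e ⟨_, hs⟩ := by
  set t := saturationDen v
  have ht : (t : R) • saturationMapFun e v = e ⟨_, saturationDen_smul_mem v⟩ := by
    rw [saturationMapFun, ← algebraMap_smul A]
    exact smul_inv_smul (isUnit_algebraMap_of_isLocalizedModule S φ t).unit _
  apply smul_right_injective_of_isLocalizedModule S φ t
  calc (t : R) • (s : R) • saturationMapFun e v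
      = (s : R) • (t : R) • saturationMapFun e v := smul_comm _ _ _
    _ = e ⟨(s : R) • (t : R) • (v : V), hM.smul_mem _ (saturationDen_smul_mem v)⟩ := by
      rw [ht, he.map_smul_algebra _ (saturationDen_smul_mem v)]
    _ = e ⟨(t : R) • (s : R) • (v : V), hM.smul_mem _ hs⟩ := by
      simp only [smul_comm (s : R) (t : R)]
    _ = (t : R) • (e ⟨_, hs⟩ : V) := he.map_smul_algebra _ _ _

lemma saturationMapFun_eq_of_smul (he : SMulEquivariant φ e) (v : saturation S φ M hM) (s : S)
    (hs : (s : R) • (v : V) ∈ M) {w : V} (hw : (s : R) • w = e ⟨_, hs⟩) :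
    saturationMapFun e v = w :=
  smul_right_injective_of_isLocalizedModule S φ s <| by
    simp only [smul_saturationMapFun he v s hs, hw]

def saturationMap (he : SMulEquivariant φ e) :
    saturation S φ M hM →ₗ[A] saturation S φ M' hM' where
  toFun v := ⟨saturationMapFun e v, saturationDen v, by
    rw [smul_saturationMapFun he v _ (saturationDen_smul_mem v)]; exact (e _).2⟩
  map_add' v w := Subtype.ext <| by
    obtain ⟨s, hs⟩ := mem_saturation.1 v.2
    obtain ⟨t, ht⟩ := mem_saturation.1 w.2
    have hsum : ((t * s : S) : R) • ((v : V) + w) ∈ M := by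
      rw [Submonoid.coe_mul, mul_smul_add_eq]
      exact add_mem (hM.smul_mem _ hs) (hM.smul_mem _ ht)
    refine saturationMapFun_eq_of_smul he _ (t * s) hsum ?_
    calc ((t * s : S) : R) • (saturationMapFun e v + saturationMapFun e w)
        = (t : R) • (e ⟨_, hs⟩ : V) + (s : R) • (e ⟨_, ht⟩ : V) := by
          rw [Submonoid.coe_mul, mul_smul_add_eq, smul_saturationMapFun he v s hs,
            smul_saturationMapFun he w t ht]
      _ = e ⟨(t : R) • (s : R) • (v : V), hM.smul_mem _ hs⟩ +
            e ⟨(s : R) • (t : R) • (w : V), hM.smul_mem _ ht⟩ := by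
          rw [he.map_smul_algebra _ hs, he.map_smul_algebra _ ht]
      _ = e ⟨_, hsum⟩ := by
          rw [← AddSubgroup.coe_add, ← map_add]
          simp only [AddMemClass.mk_add_mk, Submonoid.coe_mul, mul_smul_add_eq]
  map_smul' a v := Subtype.ext <| by
    obtain ⟨s, hs⟩ := mem_saturation.1 v.2
    obtain ⟨⟨x, t⟩, hx⟩ := IsLocalizedModule.surj S φ.toLinearMap a
    replace hx : (t : R) • a = φ x := hx
    have hmem : φ x • (s : R) • (v : V) ∈ M := hM x _ hs
    have hprod : ((t * s : S) : R) • (a • v : V) ∈ M := by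
      rwa [Submonoid.coe_mul, mul_smul_smul_of_smul_eq hx]
    refine saturationMapFun_eq_of_smul he _ (t * s) hprod ?_
    calc ((t * s : S) : R) • a • saturationMapFun e v = φ x • (e ⟨_, hs⟩ : V) := by
          rw [Submonoid.coe_mul, mul_smul_smul_of_smul_eq hx, smul_saturationMapFun he v s hs]
      _ = e ⟨_, hmem⟩ := (he x _ ⟨_, hmem⟩ rfl).symm
      _ = e ⟨_, hprod⟩ := by
          simp only [Submonoid.coe_mul, mul_smul_smul_of_smul_eq hx]

lemma saturationMap_apply_of_mem (he : SMulEquivariant φ e) (v : saturation S φ M hM)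
    (hv : (v : V) ∈ M) : (saturationMap (hM' := hM') he v : V) = e ⟨v, hv⟩ :=
  saturationMapFun_eq_of_smul he _ 1 (by simpa using hv) (by simp)

lemma saturationMap_symm_saturationMap (he : SMulEquivariant φ e) (v : saturation S φ M hM) :
    saturationMap (hM' := hM) (he.symm hM) (saturationMap (hM' := hM') he v) = v := by
  obtain ⟨s, hs⟩ := mem_saturation.1 v.2
  have hmap : (saturationMap (hM' := hM') he v : V) = saturationMapFun e v := rfl
  have hs' : (s : R) • (saturationMap (hM' := hM') he v : V) ∈ M' := by
    rw [hmap, smul_saturationMapFun he v s hs]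
    exact (e _).2
  refine Subtype.ext (saturationMapFun_eq_of_smul (he.symm hM) _ s hs' ?_)
  simp only [hmap, smul_saturationMapFun he v s hs, Subtype.coe_eta, AddEquiv.symm_apply_apply]

def saturationEquiv (he : SMulEquivariant φ e) :
    saturation S φ M hM ≃ₗ[A] saturation S φ M' hM' :=
  .ofLinearMap (saturationMap he) (saturationMap (he.symm hM))
    (LinearMap.ext fun v => by
      simpa only [AddEquiv.symm_symm, LinearMap.comp_apply, LinearMap.id_apply] using
        saturationMap_symm_saturationMap (he.symm hM) v)
    (LinearMap.ext fun v => saturationMap_symm_saturationMap he v)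

lemma saturationEquiv_mem_iff (he : SMulEquivariant φ e) (v : saturation S φ M hM) :
    (v : V) ∈ M ↔ (saturationEquiv (hM' := hM') he v : V) ∈ M' := by
  refine ⟨fun hv => (saturationMap_apply_of_mem he v hv).symm ▸ (e _).2, fun hv => ?_⟩
  rw [← (saturationEquiv (hM' := hM') he).symm_apply_apply v]
  exact (saturationMap_apply_of_mem (he.symm hM) _ hv).symm ▸ (e.symm _).2

end Saturation

theorem exists_smulEquivariant_of_generates {R Λ A V B : Type*} [CommRing R] [Ring Λ]
    [Algebra R Λ] [Ring A] [Algebra R A] [AddCommGroup V] [Module A V] [Module R V]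
    [IsScalarTower R A V] (S : Submonoid R) {φ : Λ →ₐ[R] A} [IsLocalizedModule S φ.toLinearMap]
    {f : B → A} {M M' N : AddSubgroup V} {e : M ≃+ M'} (hM : SMulStable φ M)
    (hM' : SMulStable φ M') (hN : SMulStable f N)
    (hMgen : ∀ T : AddSubgroup V, SMulStable f T → M ≤ T → N ≤ T)
    (hM'gen : ∀ T : AddSubgroup V, SMulStable f T → M' ≤ T → N ≤ T) (hMN : M ≤ N)
    (hM'N : M' ≤ N) (he : SMulEquivariant φ e) :
    ∃ σ : N ≃+ N, SMulEquivariant f σ ∧ ∀ v : N, (v : V) ∈ M ↔ (σ v : V) ∈ M' := by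
  let E := saturationEquiv (S := S) (hM := hM) (hM' := hM') he
  have hE := exists_mem_and_map_mem_of_generates hN hMgen E.toLinearMap le_saturation
    fun v hv => (saturationMap_apply_of_mem (S := S) he v hv).symm ▸ hM'N (e _).2
  have hE' := exists_mem_and_map_mem_of_generates hN hM'gen E.symm.toLinearMap le_saturation
    fun v hv => (saturationMap_apply_of_mem (S := S) (he.symm hM) v hv).symm ▸ hMN (e.symm _).2
  have hEN (v : saturation S φ M hM) : (v : V) ∈ N ↔ (E v : V) ∈ N :=
    ⟨fun hv => (hE v hv).2, fun hv => E.symm_apply_apply v ▸ (hE' _ hv).2⟩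
  obtain ⟨σ, hσ, hσE⟩ := (E.smulEquivariant f).exists_restrict (fun v hv => (hE v hv).1)
    (fun v hv => (hE' v hv).1) hEN
  refine ⟨σ, hσ, fun v => ?_⟩
  rw [hσE]
  exact saturationEquiv_mem_iff (hM' := hM') he ⟨v, (hE v v.2).1⟩

instance (R Λ : Type) [CommRing R] [Ring Λ] [Algebra R Λ] :
    IsLocalizedModule R⁰ (Algebra.TensorProduct.includeRight :
      Λ →ₐ[R] TotalFractionAlgebra R Λ).toLinearMap :=
  IsLocalization.tensorProduct_isLocalizedModule (M := Λ) R⁰ (FractionRing R)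

section GammaPow

variable {R Λ : Type} [CommRing R] [Ring Λ] [Algebra R Λ]
  {Γ : Subring (TotalFractionAlgebra R Λ)} {n : ℕ}

lemma mem_gammaPow {v : Fin n → TotalFractionAlgebra R Λ} :
    v ∈ gammaPow R Λ Γ n ↔ ∀ i, v i ∈ Γ := by
  simp [gammaPow, AddSubgroup.mem_pi]

lemma smulStable_gammaPow :
    SMulStable ((↑) : Γ → TotalFractionAlgebra R Λ) (gammaPow R Λ Γ n) :=
  fun γ _ hv => mem_gammaPow.2 fun i => Γ.mul_mem γ.2 (mem_gammaPow.1 hv i)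

end GammaPow

theorem lambda_submodules_isomorphic_iff_gamma_automorphism_general
    (R : Type) [CommRing R]
    (Λ : Type) [Ring Λ] [Algebra R Λ]
    (Γ : Subring (TotalFractionAlgebra R Λ)) (hΓ : IsOverring R Λ Γ)
    (n : ℕ)
    (M M' : AddSubgroup (Fin n → TotalFractionAlgebra R Λ))
    (hMmod : ∀ x : Λ, ∀ v ∈ M, (fun i => inclQ R Λ x * v i) ∈ M)
    (hM'mod : ∀ x : Λ, ∀ v ∈ M', (fun i => inclQ R Λ x * v i) ∈ M')
    (hMsub : ∀ v ∈ M, ∀ i, v i ∈ Γ)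
    (hM'sub : ∀ v ∈ M', ∀ i, v i ∈ Γ)
    (hMgen : ∀ S : AddSubgroup (Fin n → TotalFractionAlgebra R Λ),
      (∀ γ ∈ Γ, ∀ v ∈ S, (fun i => γ * v i) ∈ S) → M ≤ S → gammaPow R Λ Γ n ≤ S)
    (hM'gen : ∀ S : AddSubgroup (Fin n → TotalFractionAlgebra R Λ),
      (∀ γ ∈ Γ, ∀ v ∈ S, (fun i => γ * v i) ∈ S) → M' ≤ S → gammaPow R Λ Γ n ≤ S) :
    (∃ e : ↥M ≃+ ↥M', ∀ (x : Λ) (v w : ↥M),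
        (↑w : Fin n → TotalFractionAlgebra R Λ) =
          (fun i => inclQ R Λ x * (↑v : Fin n → TotalFractionAlgebra R Λ) i) →
        (↑(e w) : Fin n → TotalFractionAlgebra R Λ) =
          fun i => inclQ R Λ x * (↑(e v) : Fin n → TotalFractionAlgebra R Λ) i) ↔
    (∃ σ : ↥(gammaPow R Λ Γ n) ≃+ ↥(gammaPow R Λ Γ n),
      (∀ γ ∈ Γ, ∀ v w : ↥(gammaPow R Λ Γ n),
        (↑w : Fin n → TotalFractionAlgebra R Λ) =
          (fun i => γ * (↑v : Fin n → TotalFractionAlgebra R Λ) i) →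
        (↑(σ w) : Fin n → TotalFractionAlgebra R Λ) =
          fun i => γ * (↑(σ v) : Fin n → TotalFractionAlgebra R Λ) i) ∧
      (∀ v : ↥(gammaPow R Λ Γ n),
        (↑v : Fin n → TotalFractionAlgebra R Λ) ∈ M ↔
        (↑(σ v) : Fin n → TotalFractionAlgebra R Λ) ∈ M')) := by
  have hMN : M ≤ gammaPow R Λ Γ n := fun v hv => mem_gammaPow.2 (hMsub v hv)
  have hM'N : M' ≤ gammaPow R Λ Γ n := fun v hv => mem_gammaPow.2 (hM'sub v hv)
  constructor
  · rintro ⟨e, he⟩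
    obtain ⟨σ, hσ, hσM⟩ := exists_smulEquivariant_of_generates
      (φ := (Algebra.TensorProduct.includeRight : Λ →ₐ[R] TotalFractionAlgebra R Λ)) R⁰
      hMmod hM'mod smulStable_gammaPow (fun T hT => hMgen T fun γ hγ => hT ⟨γ, hγ⟩)
      (fun T hT => hM'gen T fun γ hγ => hT ⟨γ, hγ⟩) hMN hM'N he
    exact ⟨σ, fun γ hγ => hσ ⟨γ, hγ⟩, hσM⟩
  · rintro ⟨σ, hσ, hσM⟩
    obtain ⟨e, he, -⟩ := SMulEquivariant.exists_restrict
      (f := ((↑) : Γ → TotalFractionAlgebra R Λ)) (fun γ => hσ γ γ.2) hMN hM'N hσM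
    exact ⟨e, fun x => he ⟨_, hΓ.1 x⟩⟩

/-- Proposition 2.5:  Let `Λ` be a CM-algebra, `Γ` an overring of `Λ` and
`M, M' ⊆ Γ^n` two `Λ`-submodules whose generated `Γ`-submodules are all of `Γ^n`.
Then `M ≅ M'` as `Λ`-modules if and only if there is an automorphism `σ` of `Γ^n`
as a `Γ`-module with `σ(M) = M'`. -/
theorem lambda_submodules_isomorphic_iff_gamma_automorphism
    (R : Type) [CommRing R] [IsLocalRing R] [IsNoetherianRing R]
    (hdim : ringKrullDim R = 1)
    (Λ : Type) [Ring Λ] [Algebra R Λ] (hCM : IsCMAlgebra R Λ)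
    (Γ : Subring (TotalFractionAlgebra R Λ)) (hΓ : IsOverring R Λ Γ)
    (n : ℕ)
    (M M' : AddSubgroup (Fin n → TotalFractionAlgebra R Λ))
    (hMmod : ∀ x : Λ, ∀ v ∈ M, (fun i => inclQ R Λ x * v i) ∈ M)
    (hM'mod : ∀ x : Λ, ∀ v ∈ M', (fun i => inclQ R Λ x * v i) ∈ M')
    (hMsub : ∀ v ∈ M, ∀ i, v i ∈ Γ)
    (hM'sub : ∀ v ∈ M', ∀ i, v i ∈ Γ)
    (hMgen : ∀ S : AddSubgroup (Fin n → TotalFractionAlgebra R Λ),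
      (∀ γ ∈ Γ, ∀ v ∈ S, (fun i => γ * v i) ∈ S) → M ≤ S → gammaPow R Λ Γ n ≤ S)
    (hM'gen : ∀ S : AddSubgroup (Fin n → TotalFractionAlgebra R Λ),
      (∀ γ ∈ Γ, ∀ v ∈ S, (fun i => γ * v i) ∈ S) → M' ≤ S → gammaPow R Λ Γ n ≤ S) :
    (∃ e : ↥M ≃+ ↥M', ∀ (x : Λ) (v w : ↥M),
        (↑w : Fin n → TotalFractionAlgebra R Λ) =
          (fun i => inclQ R Λ x * (↑v : Fin n → TotalFractionAlgebra R Λ) i) →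
        (↑(e w) : Fin n → TotalFractionAlgebra R Λ) =
          fun i => inclQ R Λ x * (↑(e v) : Fin n → TotalFractionAlgebra R Λ) i) ↔
    (∃ σ : ↥(gammaPow R Λ Γ n) ≃+ ↥(gammaPow R Λ Γ n),
      (∀ γ ∈ Γ, ∀ v w : ↥(gammaPow R Λ Γ n),
        (↑w : Fin n → TotalFractionAlgebra R Λ) =
          (fun i => γ * (↑v : Fin n → TotalFractionAlgebra R Λ) i) →
        (↑(σ w) : Fin n → TotalFractionAlgebra R Λ) =
          fun i => γ * (↑(σ v) : Fin n → TotalFractionAlgebra R Λ) i) ∧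
      (∀ v : ↥(gammaPow R Λ Γ n),
        (↑v : Fin n → TotalFractionAlgebra R Λ) ∈ M ↔
        (↑(σ v) : Fin n → TotalFractionAlgebra R Λ) ∈ M')) :=
  lambda_submodules_isomorphic_iff_gamma_automorphism_general R Λ Γ hΓ n M M' hMmod hM'mod hMsub
    hM'sub hMgen hM'gen
end
end

section
/- Let k be a field and let K and B be subfields of a field L, each containing k, such that L is the composite of K and B (i.e. L is generated as a field by K ∪ B) and the degree [L:K] = n is finite. Regard L, and hence B, as a subring of A = End_K(L) (which is isomorphic to M_n(K)) via the embedding sending x ∈ L to the K-linear map of multiplication by x. Then B is a dense subring of A. -/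
theorem IsSimpleModule.nonempty_linearEquiv_of_surjective_pi {R M U ι : Type*} [Ring R]
    [AddCommGroup M] [Module R M] [AddCommGroup U] [Module R U] [IsSimpleModule R M]
    [IsSimpleModule R U] [Finite ι] (g : (ι → M) →ₗ[R] R) (hg : Function.Surjective g) :
    Nonempty (M ≃ₗ[R] U) := by
  classical
  have := IsSimpleModule.nontrivial R U
  obtain ⟨u, hu⟩ := exists_ne (0 : U)
  set f := LinearMap.toSpanSingleton R U u ∘ₗ g
  have hf : f ≠ 0 := by
    obtain ⟨m, hm⟩ := hg 1
    intro h
    simpa [f, hm, hu] using LinearMap.congr_fun h m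
  obtain ⟨i, hi⟩ : ∃ i, f ∘ₗ LinearMap.single R (fun _ ↦ M) i ≠ 0 := by
    by_contra! h
    exact hf (LinearMap.pi_ext' fun i ↦ by rw [h i, LinearMap.zero_comp])
  exact ⟨.ofBijective _ (LinearMap.bijective_of_ne_zero hi)⟩

theorem Module.End.nonempty_linearEquiv_of_isSimpleModule (K V U : Type*) [DivisionRing K]
    [AddCommGroup V] [Module K V] [FiniteDimensional K V] [Nontrivial V] [AddCommGroup U]
    [Module (Module.End K V) U] [IsSimpleModule (Module.End K V) U] :
    Nonempty (V ≃ₗ[Module.End K V] U) :=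
  IsSimpleModule.nonempty_linearEquiv_of_surjective_pi
    ((Module.finBasis K V).constr (Module.End K V)).toLinearMap
    ((Module.finBasis K V).constr (Module.End K V)).surjective

theorem Subring.closure_union_eq_top_of_sup_eq_top {L : Type*} [Field L] (K B : Subfield L)
    [Algebra.IsAlgebraic K L] (h : K ⊔ B = ⊤) : Subring.closure ((K : Set L) ∪ B) = ⊤ := by
  have hK : Set.range (algebraMap K L) = K := Subtype.range_coe
  have hadjoin : IntermediateField.adjoin K (B : Set L) = ⊤ := by
    rw [← IntermediateField.toSubfield_inj, IntermediateField.adjoin_toSubfield, hK,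
      Subfield.closure_union, Subfield.closure_eq, Subfield.closure_eq, h]
    rfl
  rw [← hK, ← Algebra.adjoin_eq_ring_closure,
    ← IntermediateField.adjoin_toSubalgebra_of_isAlgebraic fun x _ ↦
      Algebra.IsAlgebraic.isAlgebraic x, hadjoin]
  rfl

theorem AddSubgroup.eq_bot_or_eq_top_of_mul_mem {L : Type*} [DivisionRing L] {s : Set L}
    (hs : Subring.closure s = ⊤) (T : AddSubgroup L) (hT : ∀ x ∈ s, ∀ v ∈ T, x * v ∈ T) :
    T = ⊥ ∨ T = ⊤ := by
  let stab : Subring L :=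
    { carrier := {x | ∀ v ∈ T, x * v ∈ T}
      one_mem' := fun v hv ↦ by rwa [one_mul]
      mul_mem' := fun hx hy v hv ↦ by rw [mul_assoc]; exact hx _ (hy v hv)
      zero_mem' := fun v _ ↦ by rw [zero_mul]; exact T.zero_mem
      add_mem' := fun hx hy v hv ↦ by rw [add_mul]; exact T.add_mem (hx v hv) (hy v hv)
      neg_mem' := fun hx v hv ↦ by rw [neg_mul]; exact T.neg_mem (hx v hv) }
  have hstab : stab = ⊤ := top_le_iff.1 (hs ▸ Subring.closure_le.2 hT)
  let I : Ideal L :=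
    { T.toAddSubmonoid with smul_mem' := fun x v hv ↦ (hstab ▸ Subring.mem_top x : x ∈ stab) v hv }
  rcases I.eq_bot_or_top with h | h
  · exact .inl (AddSubgroup.ext fun v ↦ SetLike.ext_iff.1 h v)
  · exact .inr (AddSubgroup.ext fun v ↦ SetLike.ext_iff.1 h v)

theorem subfield_composite_isDense_general (L : Type) [Field L] (K B : Subfield L)
    (hcomp : K ⊔ B = ⊤)
    [FiniteDimensional ↥K L] :
    IsDenseSubring (Module.End ↥K L)
      (((Algebra.lmul ↥K L).toRingHom.comp B.subtype).range) := by
  intro U _ _ _ S hB hf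
  obtain ⟨e⟩ := Module.End.nonempty_linearEquiv_of_isSimpleModule K L U
  suffices e.toAddEquiv.comapAddSubgroup S = ⊥ ∨ e.toAddEquiv.comapAddSubgroup S = ⊤ by
    simpa only [map_eq_bot_iff, map_eq_top_iff] using this
  refine AddSubgroup.eq_bot_or_eq_top_of_mul_mem
    (Subring.closure_union_eq_top_of_sup_eq_top K B hcomp) _ ?_
  rintro x (hx | hx) v (hv : e v ∈ S)
  · let smulK : L →ₗ[Module.End K L] L := DistribSMul.toLinearMap _ L (⟨x, hx⟩ : K)
    simpa [smulK, Subfield.smul_def] using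
      hf (e.toLinearMap ∘ₗ smulK ∘ₗ e.symm.toLinearMap) (e v) hv
  · have := hB _ ⟨⟨x, hx⟩, rfl⟩ (e v) hv
    rwa [← map_smul] at this

/-- Let `k ⊆ K, B ⊆ L` be subfields of a field `L` such that `L = K ⊔ B` is the composite
of `K` and `B` and `[L : K] = n` is finite.  Regarding `L` (hence `B`) as a subring of
`A = End_K(L) ≅ M_n(K)` via multiplication operators, `B` is a dense subring of `A`. -/
theorem subfield_composite_isDense (L : Type) [Field L] (k K B : Subfield L)
    (hkK : k ≤ K) (hkB : k ≤ B) (hcomp : K ⊔ B = ⊤)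
    [FiniteDimensional ↥K L] (n : ℕ) (hn : Module.finrank ↥K L = n) :
    IsDenseSubring (Module.End ↥K L)
      (((Algebra.lmul ↥K L).toRingHom.comp B.subtype).range) :=
  subfield_composite_isDense_general L K B hcomp
end
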